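/- arXiv:1303.1840 — 3 statements merged into one kernel-verified Lean document; each statement's English description precedes it below -/
import Mathlib

section
/- Let ℛ be a finite family of subsets of a finite column set U that has the consecutive-ones property, and let σ be any consecutive-ones ordering of U for ℛ. Then for every connected component 𝒞 of the overlap graph of ℛ, the union of the members of 𝒞 occupies a set of consecutive positions under σ. -/
/-- Two sets *overlap* if they intersect but neither is a subset of the other. -/
def Overlaps {α : Type*} [DecidableEq α] (A B : Finset α) : Prop :=
  (A ∩ B).Nonempty ∧ ¬ A ⊆ B ∧ ¬ B ⊆ A

instance {α : Type*} [DecidableEq α] (A B : Finset α) : Decidable (Overlaps A B) :=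
  inferInstanceAs (Decidable (_ ∧ _ ∧ _))

/-- The overlap graph of a family of sets. -/
def overlapGraph {α : Type*} [DecidableEq α] (𝓡 : Finset (Finset α)) :
    SimpleGraph {R // R ∈ 𝓡} where
  Adj A B := Overlaps A.1 B.1
  symm := ⟨by
    rintro A B ⟨h1, h2, h3⟩
    exact ⟨by rwa [Finset.inter_comm], h3, h2⟩⟩
  loopless := ⟨fun A h => h.2.1 le_rfl⟩

/-- A set `S` is *convex* (occupies consecutive positions) within the column set `U`
under the position assignment `σ`. -/
def ConvexIn {α : Type*} (U : Finset α) (σ : α → ℕ) (S : Set α) : Prop :=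
  ∀ x ∈ U, ∀ y ∈ U, ∀ z ∈ U, σ x ≤ σ y → σ y ≤ σ z → x ∈ S → z ∈ S → y ∈ S

/-- `σ` is a consecutive-ones ordering of the columns `U` for the family `𝓡`:
it linearly orders `U` (injectivity) and every member of `𝓡` is an interval of it. -/
def IsC1POrdering {α : Type*} (U : Finset α) (𝓡 : Finset (Finset α)) (σ : α → ℕ) : Prop :=
  Set.InjOn σ U ∧ ∀ R ∈ 𝓡, ConvexIn U σ (R : Set α)

/-- The family `𝓡` of subsets of the column set `U` has the consecutive-ones property. -/
def HasC1P {α : Type*} (U : Finset α) (𝓡 : Finset (Finset α)) : Prop :=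
  ∃ σ : α → ℕ, IsC1POrdering U 𝓡 σ

/-- `𝓡` is a minimal non-C1P matrix (Tucker matrix) over column set `U`. -/
def MinimalNonC1P {α : Type*} [DecidableEq α] (U : Finset α) (𝓡 : Finset (Finset α)) : Prop :=
  (∀ R ∈ 𝓡, R ⊆ U) ∧ ¬ HasC1P U 𝓡 ∧
    ∀ 𝓡' ⊆ 𝓡, ∀ U' ⊆ U, (𝓡' ≠ 𝓡 ∨ U' ≠ U) →
      HasC1P U' (𝓡'.image (· ∩ U'))

/-- The row `R` is a member of the connected component `𝒞` of the overlap graph of `𝓡`. -/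
def InComponent {α : Type*} [DecidableEq α] (𝓡 : Finset (Finset α))
    (𝒞 : (overlapGraph 𝓡).ConnectedComponent) (R : {R // R ∈ 𝓡}) : Prop :=
  (overlapGraph 𝓡).connectedComponentMk R = 𝒞

/-- Columns `x` and `y` lie in the same Venn class of the component `𝒞`:
they belong to exactly the same members of `𝒞`. -/
def SameVennClass {α : Type*} [DecidableEq α] (𝓡 : Finset (Finset α))
    (𝒞 : (overlapGraph 𝓡).ConnectedComponent) (x y : α) : Prop :=
  ∀ R, InComponent 𝓡 𝒞 R → (x ∈ R.1 ↔ y ∈ R.1)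

/-- The column `x` is constrained for the component `𝒞`: it belongs to at least one
member of `𝒞`. -/
def ConstrainedCol {α : Type*} [DecidableEq α] (𝓡 : Finset (Finset α))
    (𝒞 : (overlapGraph 𝓡).ConnectedComponent) (x : α) : Prop :=
  ∃ R, InComponent 𝓡 𝒞 R ∧ x ∈ R.1

/-! Let `x ≤ y ≤ z` with `x` in a member `A` of the component and `z` in a member `B`. Walk from
`A` to `B` in the overlap graph: consecutive members of the walk share a column `w ∈ U`, so `y`
lies either between `x` and `w`, hence in the first member since it is an interval, or between
`w` and `z`, and induction along the walk applies. -/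

section
variable {α : Type*} [DecidableEq α] {U : Finset α} {𝓡 : Finset (Finset α)} {σ : α → ℕ}

theorem exists_mem_support_of_between (hsub : ∀ R ∈ 𝓡, R ⊆ U)
    (hconv : ∀ R ∈ 𝓡, ConvexIn U σ (R : Set α))
    {A B : {R // R ∈ 𝓡}} (p : (overlapGraph 𝓡).Walk A B) {x y z : α}
    (hx : x ∈ U) (hy : y ∈ U) (hz : z ∈ U) (hxy : σ x ≤ σ y) (hyz : σ y ≤ σ z)
    (hxA : x ∈ A.1) (hzB : z ∈ B.1) :
    ∃ R ∈ p.support, y ∈ R.1 := by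
  induction p generalizing x with
  | @nil V => exact ⟨V, by simp, hconv _ V.2 x hx y hy z hz hxy hyz hxA hzB⟩
  | @cons V C D hVC p ih =>
    obtain ⟨w, hw⟩ := (show Overlaps V.1 C.1 from hVC).1
    obtain ⟨hwV, hwC⟩ := Finset.mem_inter.mp hw
    have hwU : w ∈ U := hsub V.1 V.2 hwV
    rcases le_total (σ y) (σ w) with hyw | hwy
    · exact ⟨V, by simp, hconv _ V.2 x hx y hy w hwU hxy hyw hxA hwV⟩
    · obtain ⟨R, hR, hyR⟩ := ih hwU hwy hwC hzB
      exact ⟨R, by simp [hR], hyR⟩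

theorem InComponent.of_mem_support {𝒞 : (overlapGraph 𝓡).ConnectedComponent}
    {A B R : {R // R ∈ 𝓡}} (hA : InComponent 𝓡 𝒞 A) (p : (overlapGraph 𝓡).Walk A B)
    (hR : R ∈ p.support) : InComponent 𝓡 𝒞 R :=
  (SimpleGraph.ConnectedComponent.sound ⟨p.takeUntil R hR⟩).symm.trans hA

end

/-- If `𝓡` has the consecutive-ones property and `σ` is any
consecutive-ones ordering for it, then for every connected component `𝒞` of the
overlap graph of `𝓡`, the union of the members of `𝒞` occupies consecutive
positions under `σ`. -/
theorem component_union_consecutive {α : Type*} [DecidableEq α]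
    (U : Finset α) (𝓡 : Finset (Finset α)) (hsub : ∀ R ∈ 𝓡, R ⊆ U)
    (σ : α → ℕ) (hσ : IsC1POrdering U 𝓡 σ)
    (𝒞 : (overlapGraph 𝓡).ConnectedComponent) :
    ConvexIn U σ {c : α | ∃ R, InComponent 𝓡 𝒞 R ∧ c ∈ R.1} := by
  intro x hx y hy z hz hxy hyz ⟨A, hA, hxA⟩ ⟨B, hB, hzB⟩
  obtain ⟨p⟩ : (overlapGraph 𝓡).Reachable A B :=
    SimpleGraph.ConnectedComponent.exact (hA.trans hB.symm)
  obtain ⟨R, hR, hyR⟩ :=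
    exists_mem_support_of_between hsub hσ.2 p hx hy hz hxy hyz hxA hzB
  exact ⟨R, hA.of_mem_support p hR, hyR⟩
end

section
/- Let ℛ be a finite family of subsets of a finite column set U that has the consecutive-ones property, and let 𝒞 be a connected component of the overlap graph of ℛ. Then the left-to-right order of the constrained Venn classes of 𝒞 is the same in every consecutive-ones ordering of ℛ, up to reversal: for any three columns a, b, c lying in three pairwise distinct constrained Venn classes of 𝒞 and any two consecutive-ones orderings σ and τ of ℛ, the column among a, b, c that lies between the other two under σ is the same as the one that lies between the other two under τ. -/
/-!
Compare two consecutive-ones orderings `σ`, `τ` column pair by column pair: say they agree on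
`x, y` if they put `x` and `y` in the same order. Since every row is an interval in both
orderings, moving `x` inside a row that does not contain `y` does not change whether they agree.
Hence for two overlapping rows `R`, `R'` the orderings either agree on every pair
`u ∈ R \ R'`, `v ∈ R'` or on none; this orientation of the edge `R R'` of the overlap graph
is symmetric, and two edges at the same row have the same orientation (according as
`R ∩ R'` and `R ∩ R''` are nested or not), so it is constant on a connected component.
Walking from a row separating two constrained columns of distinct Venn classes to a row that
contains the other one shows that the orderings agree on the two columns iff they agree with
the orientation of the component. So `σ` and `τ` agree on `a, b` iff they agree on `b, c`,
which is exactly that `b` lies between `a` and `c` in both or in neither.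
-/

namespace ConsecutiveOnes

variable {α : Type*} {U : Finset α} {σ τ : α → ℕ} {S : Set α} {u u' v : α}

theorem ConvexIn.lt_iff_lt_left (hS : ConvexIn U σ S) (hu : u ∈ U) (hu' : u' ∈ U)
    (hv : v ∈ U) (huS : u ∈ S) (hu'S : u' ∈ S) (hvS : v ∉ S) :
    σ u < σ v ↔ σ u' < σ v := by
  constructor <;> intro h <;> by_contra h' <;> rw [not_lt] at h'
  · exact hvS (hS u hu v hv u' hu' h.le h' huS hu'S)
  · exact hvS (hS u' hu' v hv u hu h.le h' hu'S huS)

theorem ConvexIn.lt_iff_lt_right (hS : ConvexIn U σ S) (hu : u ∈ U) (hu' : u' ∈ U)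
    (hv : v ∈ U) (huS : u ∈ S) (hu'S : u' ∈ S) (hvS : v ∉ S) :
    σ v < σ u ↔ σ v < σ u' := by
  constructor <;> intro h <;> by_contra h' <;> rw [not_lt] at h'
  · exact hvS (hS u' hu' v hv u hu h' h.le hu'S huS)
  · exact hvS (hS u hu v hv u' hu' h' h.le huS hu'S)

def SameOrder (σ τ : α → ℕ) (x y : α) : Prop :=
  σ x < σ y ↔ τ x < τ y

theorem sameOrder_comm (hσ : Set.InjOn σ U) (hτ : Set.InjOn τ U) {x y : α} (hx : x ∈ U)
    (hy : y ∈ U) (hxy : x ≠ y) : SameOrder σ τ x y ↔ SameOrder σ τ y x := by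
  have := hσ.ne hx hy hxy
  have := hτ.ne hx hy hxy
  unfold SameOrder
  omega

theorem ConvexIn.sameOrder_iff_left (hσ : ConvexIn U σ S) (hτ : ConvexIn U τ S)
    (hu : u ∈ U) (hu' : u' ∈ U) (hv : v ∈ U) (huS : u ∈ S) (hu'S : u' ∈ S) (hvS : v ∉ S) :
    SameOrder σ τ u v ↔ SameOrder σ τ u' v := by
  rw [SameOrder, SameOrder, ConvexIn.lt_iff_lt_left hσ hu hu' hv huS hu'S hvS,
    ConvexIn.lt_iff_lt_left hτ hu hu' hv huS hu'S hvS]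

theorem ConvexIn.sameOrder_iff_right (hσ : ConvexIn U σ S) (hτ : ConvexIn U τ S)
    (hu : u ∈ U) (hu' : u' ∈ U) (hv : v ∈ U) (huS : u ∈ S) (hu'S : u' ∈ S) (hvS : v ∉ S) :
    SameOrder σ τ v u ↔ SameOrder σ τ v u' := by
  rw [SameOrder, SameOrder, ConvexIn.lt_iff_lt_right hσ hu hu' hv huS hu'S hvS,
    ConvexIn.lt_iff_lt_right hτ hu hu' hv huS hu'S hvS]

theorem between_iff_of_sameOrder_iff {a b c : α} (hab : σ a ≠ σ b) (hbc : σ b ≠ σ c)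
    (hab' : τ a ≠ τ b) (hbc' : τ b ≠ τ c) (h : SameOrder σ τ a b ↔ SameOrder σ τ b c) :
    ((σ a < σ b ∧ σ b < σ c) ∨ (σ c < σ b ∧ σ b < σ a)) ↔
      ((τ a < τ b ∧ τ b < τ c) ∨ (τ c < τ b ∧ τ b < τ a)) := by
  unfold SameOrder at h
  omega

/-- Whether `σ` and `τ` orient the overlap of `R` and `R'` alike: for overlapping rows a single
pair `u ∈ R \ R'`, `v ∈ R'` decides it (`sameOrder_iff_sameOrientation`). -/
def SameOrientation (σ τ : α → ℕ) (R R' : Finset α) : Prop :=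
  ∀ u ∈ R, u ∉ R' → ∀ v ∈ R', SameOrder σ τ u v

variable {𝓡 : Finset (Finset α)} {R R' R'' : Finset α} {v' : α}

theorem sameOrder_iff_of_not_subset (hsub : ∀ R ∈ 𝓡, R ⊆ U) (hσ : IsC1POrdering U 𝓡 σ)
    (hτ : IsC1POrdering U 𝓡 τ) (hR : R ∈ 𝓡) (hR' : R' ∈ 𝓡) (hR'R : ¬ R' ⊆ R)
    (hu : u ∈ R) (hu' : u' ∈ R) (huR' : u ∉ R') (hu'R' : u' ∉ R') (hv : v ∈ R')
    (hv' : v' ∈ R') : SameOrder σ τ u v ↔ SameOrder σ τ u' v' := by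
  obtain ⟨y, hy, hyR⟩ := Finset.not_subset.1 hR'R
  have hU : ∀ {x}, x ∈ R → x ∈ U := fun hx => hsub R hR hx
  have hU' : ∀ {x}, x ∈ R' → x ∈ U := fun hx => hsub R' hR' hx
  -- move `v` to `y ∈ R' \ R`, then `u` to `u'`, then `y` to `v'`
  rw [ConvexIn.sameOrder_iff_right (hσ.2 R' hR') (hτ.2 R' hR') (hU' hv) (hU' hy) (hU hu) hv hy
      huR',
    ConvexIn.sameOrder_iff_left (hσ.2 R hR) (hτ.2 R hR) (hU hu) (hU hu') (hU' hy) hu hu' hyR,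
    ConvexIn.sameOrder_iff_right (hσ.2 R' hR') (hτ.2 R' hR') (hU' hy) (hU' hv') (hU hu') hy hv'
      hu'R']

theorem sameOrder_iff_sameOrientation (hsub : ∀ R ∈ 𝓡, R ⊆ U) (hσ : IsC1POrdering U 𝓡 σ)
    (hτ : IsC1POrdering U 𝓡 τ) (hR : R ∈ 𝓡) (hR' : R' ∈ 𝓡) (hR'R : ¬ R' ⊆ R)
    (hu : u ∈ R) (huR' : u ∉ R') (hv : v ∈ R') :
    SameOrder σ τ u v ↔ SameOrientation σ τ R R' :=
  ⟨fun h _ hu' hu'R' _ hv' =>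
    (sameOrder_iff_of_not_subset hsub hσ hτ hR hR' hR'R hu hu' huR' hu'R' hv hv').1 h,
    fun h => h u hu huR' v hv⟩

variable [DecidableEq α]

theorem sameOrientation_comm (hsub : ∀ R ∈ 𝓡, R ⊆ U) (hσ : IsC1POrdering U 𝓡 σ)
    (hτ : IsC1POrdering U 𝓡 τ) (hR : R ∈ 𝓡) (hR' : R' ∈ 𝓡) (hov : Overlaps R R') :
    SameOrientation σ τ R R' ↔ SameOrientation σ τ R' R := by
  obtain ⟨x, hx, hxR'⟩ := Finset.not_subset.1 hov.2.1
  obtain ⟨y, hy, hyR⟩ := Finset.not_subset.1 hov.2.2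
  rw [← sameOrder_iff_sameOrientation hsub hσ hτ hR hR' hov.2.2 hx hxR' hy,
    ← sameOrder_iff_sameOrientation hsub hσ hτ hR' hR hov.2.1 hy hyR hx]
  exact sameOrder_comm hσ.1 hτ.1 (hsub R hR hx) (hsub R' hR' hy) (ne_of_mem_of_not_mem hx hyR)

theorem sameOrder_iff_sameOrientation' (hsub : ∀ R ∈ 𝓡, R ⊆ U) (hσ : IsC1POrdering U 𝓡 σ)
    (hτ : IsC1POrdering U 𝓡 τ) (hR : R ∈ 𝓡) (hR' : R' ∈ 𝓡) (hov : Overlaps R R')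
    (hu : u ∈ R) (hv : v ∈ R') (hvR : v ∉ R) :
    SameOrder σ τ u v ↔ SameOrientation σ τ R R' := by
  rw [sameOrder_comm hσ.1 hτ.1 (hsub R hR hu) (hsub R' hR' hv) (ne_of_mem_of_not_mem hu hvR),
    sameOrientation_comm hsub hσ hτ hR hR' hov]
  exact sameOrder_iff_sameOrientation hsub hσ hτ hR' hR hov.2.1 hv hvR hu

theorem sameOrientation_iff_of_inter_subset (hsub : ∀ R ∈ 𝓡, R ⊆ U)
    (hσ : IsC1POrdering U 𝓡 σ) (hτ : IsC1POrdering U 𝓡 τ) (hR : R ∈ 𝓡) (hR' : R' ∈ 𝓡)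
    (hR'' : R'' ∈ 𝓡) (hov' : Overlaps R R') (hov'' : Overlaps R R'') (hnest : R ∩ R' ⊆ R'') :
    SameOrientation σ τ R R' ↔ SameOrientation σ τ R R'' := by
  obtain ⟨m, hm⟩ := hov'.1
  obtain ⟨u, hu, huR''⟩ := Finset.not_subset.1 hov''.2.1
  have huR' : u ∉ R' := fun h => huR'' (hnest (Finset.mem_inter.2 ⟨hu, h⟩))
  have hmR' : m ∈ R' := (Finset.mem_inter.1 hm).2
  rw [← sameOrder_iff_sameOrientation hsub hσ hτ hR hR' hov'.2.2 hu huR' hmR',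
    ← sameOrder_iff_sameOrientation hsub hσ hτ hR hR'' hov''.2.2 hu huR'' (hnest hm)]

theorem sameOrientation_iff_of_overlaps (hsub : ∀ R ∈ 𝓡, R ⊆ U)
    (hσ : IsC1POrdering U 𝓡 σ) (hτ : IsC1POrdering U 𝓡 τ) (hR : R ∈ 𝓡) (hR' : R' ∈ 𝓡)
    (hR'' : R'' ∈ 𝓡) (hov' : Overlaps R R') (hov'' : Overlaps R R'') :
    SameOrientation σ τ R R' ↔ SameOrientation σ τ R R'' := by
  by_cases h' : R ∩ R' ⊆ R''
  · exact sameOrientation_iff_of_inter_subset hsub hσ hτ hR hR' hR'' hov' hov'' h'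
  by_cases h'' : R ∩ R'' ⊆ R'
  · exact (sameOrientation_iff_of_inter_subset hsub hσ hτ hR hR'' hR' hov'' hov' h'').symm
  obtain ⟨a, ha, haR''⟩ := Finset.not_subset.1 h'
  obtain ⟨b, hb, hbR'⟩ := Finset.not_subset.1 h''
  rw [Finset.mem_inter] at ha hb
  rw [← sameOrder_iff_sameOrientation hsub hσ hτ hR hR' hov'.2.2 hb.1 hbR' ha.2,
    ← sameOrder_iff_sameOrientation hsub hσ hτ hR hR'' hov''.2.2 ha.1 haR'' hb.2]
  exact sameOrder_comm hσ.1 hτ.1 (hsub R hR hb.1) (hsub R hR ha.1)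
    (ne_of_mem_of_not_mem ha.2 hbR').symm

theorem sameOrientation_iff_of_adj (hsub : ∀ R ∈ 𝓡, R ⊆ U) (hσ : IsC1POrdering U 𝓡 σ)
    (hτ : IsC1POrdering U 𝓡 τ) {P N N' : {R // R ∈ 𝓡}} (hN : (overlapGraph 𝓡).Adj P N)
    (hN' : (overlapGraph 𝓡).Adj P N') :
    SameOrientation σ τ P.1 N.1 ↔ SameOrientation σ τ P.1 N'.1 :=
  sameOrientation_iff_of_overlaps hsub hσ hτ P.2 N.2 N'.2 hN hN'

theorem sameOrientation_iff_of_walk (hsub : ∀ R ∈ 𝓡, R ⊆ U) (hσ : IsC1POrdering U 𝓡 σ)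
    (hτ : IsC1POrdering U 𝓡 τ) {P Q N N' : {R // R ∈ 𝓡}} (W : (overlapGraph 𝓡).Walk P Q)
    (hN : (overlapGraph 𝓡).Adj P N) (hN' : (overlapGraph 𝓡).Adj Q N') :
    SameOrientation σ τ P.1 N.1 ↔ SameOrientation σ τ Q.1 N'.1 := by
  induction W generalizing N with
  | nil => exact sameOrientation_iff_of_adj hsub hσ hτ hN hN'
  | @cons P P₂ Q hP₂ W ih =>
    rw [sameOrientation_iff_of_adj hsub hσ hτ hN hP₂,
      sameOrientation_comm hsub hσ hτ P.2 P₂.2 hP₂]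
    exact ih hP₂.symm hN'

theorem sameOrder_iff_sameOrientation_of_walk (hsub : ∀ R ∈ 𝓡, R ⊆ U)
    (hσ : IsC1POrdering U 𝓡 σ) (hτ : IsC1POrdering U 𝓡 τ) {P Q N : {R // R ∈ 𝓡}}
    (W : (overlapGraph 𝓡).Walk P Q) {x y : α} (hx : x ∈ P.1) (hy : y ∈ Q.1) (hyP : y ∉ P.1)
    (hN : (overlapGraph 𝓡).Adj P N) :
    SameOrder σ τ x y ↔ SameOrientation σ τ P.1 N.1 := by
  induction W generalizing x N with
  | nil => exact absurd hy hyP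
  | @cons P P₂ Q hP₂ W ih =>
    rw [sameOrientation_iff_of_adj hsub hσ hτ hN hP₂]
    by_cases hyP₂ : y ∈ P₂.1
    · exact sameOrder_iff_sameOrientation' hsub hσ hτ P.2 P₂.2 hP₂ hx hyP₂ hyP
    · obtain ⟨m, hm⟩ := hP₂.1
      rw [Finset.mem_inter] at hm
      rw [ConvexIn.sameOrder_iff_left (hσ.2 P.1 P.2) (hτ.2 P.1 P.2) (hsub _ P.2 hx)
          (hsub _ P.2 hm.1) (hsub _ Q.2 hy) hx hm.1 hyP,
        sameOrientation_comm hsub hσ hτ P.2 P₂.2 hP₂]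
      exact ih hm.2 hy hyP₂ hP₂.symm

theorem reachable_of_inComponent {𝒞 : (overlapGraph 𝓡).ConnectedComponent} {P Q : {R // R ∈ 𝓡}}
    (hP : InComponent 𝓡 𝒞 P) (hQ : InComponent 𝓡 𝒞 Q) : (overlapGraph 𝓡).Reachable P Q :=
  SimpleGraph.ConnectedComponent.exact (hP.trans hQ.symm)

def SameOrientationOn (σ τ : α → ℕ) (𝒞 : (overlapGraph 𝓡).ConnectedComponent) : Prop :=
  ∀ P N : {R // R ∈ 𝓡}, InComponent 𝓡 𝒞 P → (overlapGraph 𝓡).Adj P N →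
    SameOrientation σ τ P.1 N.1

theorem sameOrientation_iff_sameOrientationOn (hsub : ∀ R ∈ 𝓡, R ⊆ U)
    (hσ : IsC1POrdering U 𝓡 σ) (hτ : IsC1POrdering U 𝓡 τ)
    {𝒞 : (overlapGraph 𝓡).ConnectedComponent} {P N : {R // R ∈ 𝓡}} (hP : InComponent 𝓡 𝒞 P)
    (hN : (overlapGraph 𝓡).Adj P N) :
    SameOrientation σ τ P.1 N.1 ↔ SameOrientationOn σ τ 𝒞 := by
  refine ⟨fun h P' N' hP' hN' => ?_, fun h => h P N hP hN⟩
  obtain ⟨W⟩ := reachable_of_inComponent hP hP'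
  exact (sameOrientation_iff_of_walk hsub hσ hτ W hN hN').1 h

theorem sameOrder_iff_sameOrientationOn_of_mem (hsub : ∀ R ∈ 𝓡, R ⊆ U)
    (hσ : IsC1POrdering U 𝓡 σ) (hτ : IsC1POrdering U 𝓡 τ)
    {𝒞 : (overlapGraph 𝓡).ConnectedComponent} {R : {R // R ∈ 𝓡}} (hR : InComponent 𝓡 𝒞 R)
    {x y : α} (hx : x ∈ R.1) (hyR : y ∉ R.1) (hy : ConstrainedCol 𝓡 𝒞 y) :
    SameOrder σ τ x y ↔ SameOrientationOn σ τ 𝒞 := by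
  obtain ⟨Q, hQ, hyQ⟩ := hy
  obtain ⟨W⟩ := reachable_of_inComponent hR hQ
  cases W with
  | nil => exact absurd hyQ hyR
  | cons hN W =>
    rw [sameOrder_iff_sameOrientation_of_walk hsub hσ hτ (.cons hN W) hx hyQ hyR hN,
      sameOrientation_iff_sameOrientationOn hsub hσ hτ hR hN]

theorem sameOrder_iff_sameOrientationOn (hsub : ∀ R ∈ 𝓡, R ⊆ U)
    (hσ : IsC1POrdering U 𝓡 σ) (hτ : IsC1POrdering U 𝓡 τ)
    {𝒞 : (overlapGraph 𝓡).ConnectedComponent} {x y : α} (hxU : x ∈ U) (hyU : y ∈ U)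
    (hx : ConstrainedCol 𝓡 𝒞 x) (hy : ConstrainedCol 𝓡 𝒞 y) (hxy : ¬ SameVennClass 𝓡 𝒞 x y) :
    SameOrder σ τ x y ↔ SameOrientationOn σ τ 𝒞 := by
  obtain ⟨R, hR, hsep⟩ : ∃ R, InComponent 𝓡 𝒞 R ∧ ¬ (x ∈ R.1 ↔ y ∈ R.1) := by
    simpa [SameVennClass] using hxy
  by_cases hxR : x ∈ R.1
  · have hyR : y ∉ R.1 := fun hyR => hsep (iff_of_true hxR hyR)
    exact sameOrder_iff_sameOrientationOn_of_mem hsub hσ hτ hR hxR hyR hy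
  · have hyR : y ∈ R.1 := by tauto
    rw [sameOrder_comm hσ.1 hτ.1 hxU hyU (ne_of_mem_of_not_mem hyR hxR).symm]
    exact sameOrder_iff_sameOrientationOn_of_mem hsub hσ hτ hR hyR hxR hx

end ConsecutiveOnes

open ConsecutiveOnes in
theorem vennClass_order_unique_up_to_reversal_general {α : Type*} [DecidableEq α]
    (U : Finset α) (𝓡 : Finset (Finset α)) (hsub : ∀ R ∈ 𝓡, R ⊆ U)
    (𝒞 : (overlapGraph 𝓡).ConnectedComponent)
    (a b c : α) (ha : a ∈ U) (hb : b ∈ U) (hc : c ∈ U)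
    (hcona : ConstrainedCol 𝓡 𝒞 a) (hconb : ConstrainedCol 𝓡 𝒞 b)
    (hconc : ConstrainedCol 𝓡 𝒞 c)
    (hab : ¬ SameVennClass 𝓡 𝒞 a b) (hbc : ¬ SameVennClass 𝓡 𝒞 b c)
    (σ τ : α → ℕ) (hσ : IsC1POrdering U 𝓡 σ) (hτ : IsC1POrdering U 𝓡 τ) :
    ((σ a < σ b ∧ σ b < σ c) ∨ (σ c < σ b ∧ σ b < σ a)) ↔
      ((τ a < τ b ∧ τ b < τ c) ∨ (τ c < τ b ∧ τ b < τ a)) := by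
  have hne : ∀ {x y : α}, ¬ SameVennClass 𝓡 𝒞 x y → x ≠ y := by
    rintro x _ hxy rfl
    exact hxy fun _ _ => Iff.rfl
  refine between_iff_of_sameOrder_iff (hσ.1.ne ha hb (hne hab)) (hσ.1.ne hb hc (hne hbc))
    (hτ.1.ne ha hb (hne hab)) (hτ.1.ne hb hc (hne hbc)) ?_
  rw [sameOrder_iff_sameOrientationOn hsub hσ hτ ha hb hcona hconb hab,
    sameOrder_iff_sameOrientationOn hsub hσ hτ hb hc hconb hconc hbc]

/-- The left-to-right order of the constrained Venn classes of a
connected component `𝒞` of the overlap graph is the same in every consecutive-ones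
ordering, up to reversal: for columns `a, b, c` in three pairwise distinct
constrained Venn classes of `𝒞` and any two consecutive-ones orderings `σ, τ`,
the column `b` lies between `a` and `c` under `σ` iff it does so under `τ`. -/
theorem vennClass_order_unique_up_to_reversal {α : Type*} [DecidableEq α]
    (U : Finset α) (𝓡 : Finset (Finset α)) (hsub : ∀ R ∈ 𝓡, R ⊆ U)
    (𝒞 : (overlapGraph 𝓡).ConnectedComponent)
    (a b c : α) (ha : a ∈ U) (hb : b ∈ U) (hc : c ∈ U)
    (hcona : ConstrainedCol 𝓡 𝒞 a) (hconb : ConstrainedCol 𝓡 𝒞 b)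
    (hconc : ConstrainedCol 𝓡 𝒞 c)
    (hab : ¬ SameVennClass 𝓡 𝒞 a b) (hbc : ¬ SameVennClass 𝓡 𝒞 b c)
    (hac : ¬ SameVennClass 𝓡 𝒞 a c)
    (σ τ : α → ℕ) (hσ : IsC1POrdering U 𝓡 σ) (hτ : IsC1POrdering U 𝓡 τ) :
    ((σ a < σ b ∧ σ b < σ c) ∨ (σ c < σ b ∧ σ b < σ a)) ↔
      ((τ a < τ b ∧ τ b < τ c) ∨ (τ c < τ b ∧ τ b < τ a)) :=
  vennClass_order_unique_up_to_reversal_general U 𝓡 hsub 𝒞 a b c ha hb hc hcona hconb hconc hab hbc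
    σ τ hσ hτ
end

section
/- Let ℛ' be a finite family of subsets of a finite column set U that has the consecutive-ones property, let 𝒞 be a connected component of the overlap graph of ℛ', and let Z ⊆ U. Suppose there exist a consecutive-ones ordering σ of ℛ' and columns a, b, c lying in three pairwise distinct constrained Venn classes of 𝒞 such that σ(a) < σ(b) < σ(c), a ∈ Z, b ∉ Z, and c ∈ Z (a 1-0-1 configuration for Z). Then ℛ' ∪ {Z} does not have the consecutive-ones property. -/
/-!
Every row is an interval, so a column outside a row lies on one side of all of it. Hence, for two
consecutive-ones orderings `σ` and `θ` and rows `A`, `B`, whether `σ` and `θ` order `x` and `y`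
alike is the same for all `x ∈ A`, `y ∈ B` with `x ∉ B` or `y ∉ A`. Two rows meeting a common row
get the same value, so connectedness spreads it over the whole component `𝒞`: any
consecutive-ones ordering `θ` of `𝓡' ∪ {Z}` preserves or reverses `σ` on all pairs of constrained
columns from different Venn classes of `𝒞`. Either way `b` stays between `a` and `c`, and `Z` is
not an interval.
-/

section

variable {α : Type*}

theorem IsC1POrdering.mono {U : Finset α} {𝓡 𝓢 : Finset (Finset α)} {σ : α → ℕ}
    (h : IsC1POrdering U 𝓡 σ) (h𝓢 : 𝓢 ⊆ 𝓡) : IsC1POrdering U 𝓢 σ :=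
  ⟨h.1, fun R hR => h.2 R (h𝓢 hR)⟩

section ConvexIn

variable {U : Finset α} {σ : α → ℕ} {R : Set α} {x x' y : α}

theorem ConvexIn.lt_iff_lt_left (hR : ConvexIn U σ R) (hx : x ∈ U) (hx' : x' ∈ U) (hy : y ∈ U)
    (hxR : x ∈ R) (hx'R : x' ∈ R) (hyR : y ∉ R) : σ x < σ y ↔ σ x' < σ y := by
  constructor <;> intro h <;> by_contra! h'
  · exact hyR (hR x hx y hy x' hx' h.le h' hxR hx'R)
  · exact hyR (hR x' hx' y hy x hx h.le h' hx'R hxR)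

theorem ConvexIn.lt_iff_lt_right (hR : ConvexIn U σ R) (hx : x ∈ U) (hx' : x' ∈ U) (hy : y ∈ U)
    (hxR : x ∈ R) (hx'R : x' ∈ R) (hyR : y ∉ R) : σ y < σ x ↔ σ y < σ x' := by
  constructor <;> intro h <;> by_contra! h'
  · exact hyR (hR x' hx' y hy x hx h' h.le hx'R hxR)
  · exact hyR (hR x hx y hy x' hx' h' h.le hxR hx'R)

end ConvexIn

def SameOrder (σ θ : α → ℕ) (x y : α) : Prop :=
  (σ x < σ y ↔ θ x < θ y)

section SameOrder

variable {U : Finset α} {𝓡 : Finset (Finset α)} {σ θ : α → ℕ} {A B C : Finset α}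
  {x x' y p q r t : α}

theorem sameOrder_comm (hσ : Set.InjOn σ U) (hθ : Set.InjOn θ U) (hx : x ∈ U) (hy : y ∈ U)
    (hxy : x ≠ y) : SameOrder σ θ x y ↔ SameOrder σ θ y x := by
  have hσxy : σ x ≠ σ y := fun h => hxy (hσ hx hy h)
  have hθxy : θ x ≠ θ y := fun h => hxy (hθ hx hy h)
  unfold SameOrder
  omega

theorem sameOrder_congr_left (hsub : ∀ R ∈ 𝓡, R ⊆ U) (hσ : IsC1POrdering U 𝓡 σ)
    (hθ : IsC1POrdering U 𝓡 θ) (hA : A ∈ 𝓡) (hx : x ∈ A) (hx' : x' ∈ A) (hy : y ∈ U)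
    (hyA : y ∉ A) : SameOrder σ θ x y ↔ SameOrder σ θ x' y := by
  have hxU := hsub A hA hx
  have hx'U := hsub A hA hx'
  unfold SameOrder
  rw [(hσ.2 A hA).lt_iff_lt_left hxU hx'U hy hx hx' hyA,
    (hθ.2 A hA).lt_iff_lt_left hxU hx'U hy hx hx' hyA]

theorem sameOrder_congr_right (hsub : ∀ R ∈ 𝓡, R ⊆ U) (hσ : IsC1POrdering U 𝓡 σ)
    (hθ : IsC1POrdering U 𝓡 θ) (hA : A ∈ 𝓡) (hx : x ∈ A) (hx' : x' ∈ A) (hy : y ∈ U)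
    (hyA : y ∉ A) : SameOrder σ θ y x ↔ SameOrder σ θ y x' := by
  have hxU := hsub A hA hx
  have hx'U := hsub A hA hx'
  unfold SameOrder
  rw [(hσ.2 A hA).lt_iff_lt_right hxU hx'U hy hx hx' hyA,
    (hθ.2 A hA).lt_iff_lt_right hxU hx'U hy hx hx' hyA]

variable [DecidableEq α]

theorem sameOrder_iff_of_mem_sdiff (hsub : ∀ R ∈ 𝓡, R ⊆ U) (hσ : IsC1POrdering U 𝓡 σ)
    (hθ : IsC1POrdering U 𝓡 θ) (hA : A ∈ 𝓡) (hB : B ∈ 𝓡) (hx : x ∈ A) (hy : y ∈ B)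
    (hxy : x ∉ B ∨ y ∉ A) (hp : p ∈ A \ B) (hq : q ∈ B \ A) :
    SameOrder σ θ x y ↔ SameOrder σ θ p q := by
  rw [Finset.mem_sdiff] at hp hq
  rcases hxy with hxB | hyA
  · rw [sameOrder_congr_right hsub hσ hθ hB hy hq.1 (hsub A hA hx) hxB,
      sameOrder_congr_left hsub hσ hθ hA hx hp.1 (hsub B hB hq.1) hq.2]
  · rw [sameOrder_congr_left hsub hσ hθ hA hx hp.1 (hsub B hB hy) hyA,
      sameOrder_congr_right hsub hσ hθ hB hy hq.1 (hsub A hA hp.1) hp.2]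

theorem sameOrder_sdiff_iff_of_inter_subset (hsub : ∀ R ∈ 𝓡, R ⊆ U)
    (hσ : IsC1POrdering U 𝓡 σ) (hθ : IsC1POrdering U 𝓡 θ) (hA : A ∈ 𝓡) (hB : B ∈ 𝓡)
    (hC : C ∈ 𝓡) (hAB : (A ∩ B).Nonempty) (hABC : A ∩ B ⊆ C) (hp : p ∈ A \ B)
    (hq : q ∈ B \ A) (hr : r ∈ C \ B) (ht : t ∈ B \ C) :
    SameOrder σ θ p q ↔ SameOrder σ θ r t := by
  obtain ⟨w, hw⟩ := hAB
  obtain ⟨htB, htC⟩ := Finset.mem_sdiff.mp ht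
  have htA : t ∉ A := fun htA => htC (hABC (Finset.mem_inter.mpr ⟨htA, htB⟩))
  rw [← sameOrder_iff_of_mem_sdiff hsub hσ hθ hA hB (Finset.mem_inter.mp hw).1 htB (Or.inr htA)
      hp hq,
    ← sameOrder_iff_of_mem_sdiff hsub hσ hθ hC hB (hABC hw) htB (Or.inr htC) hr ht]

theorem sameOrder_sdiff_iff_of_inter_nonempty (hsub : ∀ R ∈ 𝓡, R ⊆ U)
    (hσ : IsC1POrdering U 𝓡 σ) (hθ : IsC1POrdering U 𝓡 θ) (hA : A ∈ 𝓡) (hB : B ∈ 𝓡)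
    (hC : C ∈ 𝓡) (hAB : (A ∩ B).Nonempty) (hCB : (C ∩ B).Nonempty) (hp : p ∈ A \ B)
    (hq : q ∈ B \ A) (hr : r ∈ C \ B) (ht : t ∈ B \ C) :
    SameOrder σ θ p q ↔ SameOrder σ θ r t := by
  by_cases hABC : A ∩ B ⊆ C
  · exact sameOrder_sdiff_iff_of_inter_subset hsub hσ hθ hA hB hC hAB hABC hp hq hr ht
  by_cases hCBA : C ∩ B ⊆ A
  · exact (sameOrder_sdiff_iff_of_inter_subset hsub hσ hθ hC hB hA hCB hCBA hr ht hp hq).symm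
  obtain ⟨u, hu, huC⟩ := Finset.not_subset.mp hABC
  obtain ⟨v, hv, hvA⟩ := Finset.not_subset.mp hCBA
  rw [Finset.mem_inter] at hu hv
  -- `u` and `v` are separated by `A` and by `C`, but in opposite orientations.
  rw [← sameOrder_iff_of_mem_sdiff hsub hσ hθ hA hB hu.1 hv.2 (Or.inr hvA) hp hq,
    ← sameOrder_iff_of_mem_sdiff hsub hσ hθ hC hB hv.1 hu.2 (Or.inr huC) hr ht]
  exact sameOrder_comm hσ.1 hθ.1 (hsub A hA hu.1) (hsub C hC hv.1)
    (by rintro rfl; exact hvA hu.1)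

end SameOrder

section OverlapGraph

variable [DecidableEq α] {U : Finset α} {𝓡 : Finset (Finset α)} {σ θ : α → ℕ} {x y p q r t : α}

theorem sameOrder_sdiff_iff_of_reachable (hsub : ∀ R ∈ 𝓡, R ⊆ U) (hσ : IsC1POrdering U 𝓡 σ)
    (hθ : IsC1POrdering U 𝓡 θ) {A B C D : {R // R ∈ 𝓡}} (hAB : (overlapGraph 𝓡).Adj A B)
    (hCD : (overlapGraph 𝓡).Adj C D) (hBD : (overlapGraph 𝓡).Reachable B D)
    (hp : p ∈ A.1 \ B.1) (hq : q ∈ B.1 \ A.1) (hr : r ∈ C.1 \ D.1) (ht : t ∈ D.1 \ C.1) :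
    SameOrder σ θ p q ↔ SameOrder σ θ r t := by
  rw [SimpleGraph.reachable_iff_reflTransGen] at hBD
  induction hBD generalizing C r t with
  | refl =>
    exact sameOrder_sdiff_iff_of_inter_nonempty hsub hσ hθ A.2 B.2 C.2 hAB.1 hCD.1 hp hq hr ht
  | @tail X D _ hXD ih =>
    obtain ⟨r', hr'D, hr'X⟩ := Finset.not_subset.mp hXD.2.2
    obtain ⟨t', ht'X, ht'D⟩ := Finset.not_subset.mp hXD.2.1
    rw [ih hXD.symm (Finset.mem_sdiff.mpr ⟨hr'D, hr'X⟩) (Finset.mem_sdiff.mpr ⟨ht'X, ht'D⟩),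
      sameOrder_comm hσ.1 hθ.1 (hsub D.1 D.2 hr'D) (hsub X.1 X.2 ht'X)
        (by rintro rfl; exact hr'X ht'X)]
    exact sameOrder_sdiff_iff_of_inter_nonempty hsub hσ hθ X.2 D.2 C.2 hXD.1 hCD.1
      (Finset.mem_sdiff.mpr ⟨ht'X, ht'D⟩) (Finset.mem_sdiff.mpr ⟨hr'D, hr'X⟩) hr ht

theorem sameOrder_iff_of_reachable (hsub : ∀ R ∈ 𝓡, R ⊆ U) (hσ : IsC1POrdering U 𝓡 σ)
    (hθ : IsC1POrdering U 𝓡 θ) {A B R S : {R // R ∈ 𝓡}} (hAB : (overlapGraph 𝓡).Adj A B)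
    (hp : p ∈ A.1 \ B.1) (hq : q ∈ B.1 \ A.1) (hBS : (overlapGraph 𝓡).Reachable B S)
    (hSR : (overlapGraph 𝓡).Reachable S R) (hxR : x ∈ R.1) (hyS : y ∈ S.1) (hyR : y ∉ R.1) :
    SameOrder σ θ x y ↔ SameOrder σ θ p q := by
  rw [SimpleGraph.reachable_iff_reflTransGen] at hSR
  induction hSR generalizing x with
  | refl => exact absurd hyS hyR
  | @tail X R hSX hXR ih =>
    by_cases hyX : y ∈ X.1
    · obtain ⟨p', hp'R, hp'X⟩ := Finset.not_subset.mp hXR.2.2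
      obtain ⟨q', hq'X, hq'R⟩ := Finset.not_subset.mp hXR.2.1
      rw [sameOrder_iff_of_mem_sdiff hsub hσ hθ R.2 X.2 hxR hyX (Or.inr hyR)
        (Finset.mem_sdiff.mpr ⟨hp'R, hp'X⟩) (Finset.mem_sdiff.mpr ⟨hq'X, hq'R⟩)]
      exact (sameOrder_sdiff_iff_of_reachable hsub hσ hθ hAB hXR.symm
        (hBS.trans ((SimpleGraph.reachable_iff_reflTransGen S X).mpr hSX)) hp hq
        (Finset.mem_sdiff.mpr ⟨hp'R, hp'X⟩) (Finset.mem_sdiff.mpr ⟨hq'X, hq'R⟩)).symm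
    · obtain ⟨w, hw⟩ := hXR.1
      rw [Finset.mem_inter] at hw
      rw [sameOrder_congr_left hsub hσ hθ R.2 hxR hw.2 (hsub S.1 S.2 hyS) hyR]
      exact ih hw.1 hyX

end OverlapGraph

section Component

variable [DecidableEq α] {U : Finset α} {𝓡 : Finset (Finset α)}
  {𝒞 : (overlapGraph 𝓡).ConnectedComponent} {σ θ : α → ℕ} {x y x' y' p q : α}

theorem ConstrainedCol.mem (hsub : ∀ R ∈ 𝓡, R ⊆ U) (hx : ConstrainedCol 𝓡 𝒞 x) : x ∈ U :=
  let ⟨R, _, hxR⟩ := hx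
  hsub R.1 R.2 hxR

theorem exists_adj_of_not_sameVennClass (hx : ConstrainedCol 𝓡 𝒞 x)
    (hy : ConstrainedCol 𝓡 𝒞 y) (hxy : ¬ SameVennClass 𝓡 𝒞 x y) :
    ∃ A B, (overlapGraph 𝓡).Adj A B ∧ InComponent 𝓡 𝒞 B := by
  obtain ⟨R, hR, hxyR⟩ : ∃ R, InComponent 𝓡 𝒞 R ∧ ¬ (x ∈ R.1 ↔ y ∈ R.1) := by
    simpa [SameVennClass] using hxy
  obtain ⟨S, hS, z, hzS, hzR⟩ : ∃ S, InComponent 𝓡 𝒞 S ∧ ∃ z ∈ S.1, z ∉ R.1 := by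
    by_cases hxR : x ∈ R.1
    · obtain ⟨S, hS, hyS⟩ := hy
      exact ⟨S, hS, y, hyS, fun hyR => hxyR (iff_of_true hxR hyR)⟩
    · obtain ⟨S, hS, hxS⟩ := hx
      exact ⟨S, hS, x, hxS, hxR⟩
  obtain ⟨w⟩ := SimpleGraph.ConnectedComponent.exact (hR.trans hS.symm)
  exact ⟨w.snd, R, (w.adj_snd (w.not_nil_of_ne (by rintro rfl; exact hzR hzS))).symm, hR⟩

theorem sameOrder_iff_of_adj_of_not_sameVennClass (hsub : ∀ R ∈ 𝓡, R ⊆ U)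
    (hσ : IsC1POrdering U 𝓡 σ) (hθ : IsC1POrdering U 𝓡 θ) {A B : {R // R ∈ 𝓡}}
    (hAB : (overlapGraph 𝓡).Adj A B) (hB : InComponent 𝓡 𝒞 B) (hp : p ∈ A.1 \ B.1)
    (hq : q ∈ B.1 \ A.1) (hx : ConstrainedCol 𝓡 𝒞 x) (hy : ConstrainedCol 𝓡 𝒞 y)
    (hxy : ¬ SameVennClass 𝓡 𝒞 x y) : SameOrder σ θ x y ↔ SameOrder σ θ p q := by
  have reach : ∀ {S}, InComponent 𝓡 𝒞 S → (overlapGraph 𝓡).Reachable B S := fun hS =>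
    SimpleGraph.ConnectedComponent.exact (hB.trans hS.symm)
  obtain ⟨R, hR, hxyR⟩ : ∃ R, InComponent 𝓡 𝒞 R ∧ ¬ (x ∈ R.1 ↔ y ∈ R.1) := by
    simpa [SameVennClass] using hxy
  by_cases hxR : x ∈ R.1
  · obtain ⟨S, hS, hyS⟩ := hy
    exact sameOrder_iff_of_reachable hsub hσ hθ hAB hp hq (reach hS)
      ((reach hS).symm.trans (reach hR)) hxR hyS (fun hyR => hxyR (iff_of_true hxR hyR))
  · have hyR : y ∈ R.1 := by tauto
    obtain ⟨S, hS, hxS⟩ := hx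
    rw [sameOrder_comm hσ.1 hθ.1 (hsub S.1 S.2 hxS) (hsub R.1 R.2 hyR)
      (by rintro rfl; exact hxR hyR)]
    exact sameOrder_iff_of_reachable hsub hσ hθ hAB hp hq (reach hS)
      ((reach hS).symm.trans (reach hR)) hyR hxS hxR

theorem sameOrder_iff_of_not_sameVennClass (hsub : ∀ R ∈ 𝓡, R ⊆ U)
    (hσ : IsC1POrdering U 𝓡 σ) (hθ : IsC1POrdering U 𝓡 θ) (hx : ConstrainedCol 𝓡 𝒞 x)
    (hy : ConstrainedCol 𝓡 𝒞 y) (hx' : ConstrainedCol 𝓡 𝒞 x') (hy' : ConstrainedCol 𝓡 𝒞 y')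
    (hxy : ¬ SameVennClass 𝓡 𝒞 x y) (hxy' : ¬ SameVennClass 𝓡 𝒞 x' y') :
    SameOrder σ θ x y ↔ SameOrder σ θ x' y' := by
  obtain ⟨A, B, hAB, hB⟩ := exists_adj_of_not_sameVennClass hx hy hxy
  obtain ⟨p, hpA, hpB⟩ := Finset.not_subset.mp hAB.2.1
  obtain ⟨q, hqB, hqA⟩ := Finset.not_subset.mp hAB.2.2
  have hp : p ∈ A.1 \ B.1 := Finset.mem_sdiff.mpr ⟨hpA, hpB⟩
  have hq : q ∈ B.1 \ A.1 := Finset.mem_sdiff.mpr ⟨hqB, hqA⟩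
  rw [sameOrder_iff_of_adj_of_not_sameVennClass hsub hσ hθ hAB hB hp hq hx hy hxy,
    sameOrder_iff_of_adj_of_not_sameVennClass hsub hσ hθ hAB hB hp hq hx' hy' hxy']

end Component

end

theorem one_zero_one_violation_general {α : Type*} [DecidableEq α]
    (U : Finset α) (𝓡' : Finset (Finset α)) (hsub : ∀ R ∈ 𝓡', R ⊆ U)
    (𝒞 : (overlapGraph 𝓡').ConnectedComponent)
    (Z : Finset α)
    (σ : α → ℕ) (hσ : IsC1POrdering U 𝓡' σ)
    (a b c : α)
    (hcona : ConstrainedCol 𝓡' 𝒞 a) (hconb : ConstrainedCol 𝓡' 𝒞 b)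
    (hconc : ConstrainedCol 𝓡' 𝒞 c)
    (hab : ¬ SameVennClass 𝓡' 𝒞 a b) (hbc : ¬ SameVennClass 𝓡' 𝒞 b c)
    (horder : σ a < σ b ∧ σ b < σ c)
    (haZ : a ∈ Z) (hbZ : b ∉ Z) (hcZ : c ∈ Z) :
    ¬ HasC1P U (insert Z 𝓡') := by
  rintro ⟨θ, hθ⟩
  have hsame := sameOrder_iff_of_not_sameVennClass hsub hσ (hθ.mono (Finset.subset_insert Z 𝓡'))
    hcona hconb hconb hconc hab hbc
  have hθabc : θ a < θ b ↔ θ b < θ c := by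
    simpa only [SameOrder, horder.1, horder.2, true_iff] using hsame
  have hZ := hθ.2 Z (Finset.mem_insert_self Z 𝓡')
  have ha := hcona.mem hsub
  have hb := hconb.mem hsub
  have hc := hconc.mem hsub
  apply hbZ
  by_cases hθab : θ a < θ b
  · exact hZ a ha b hb c hc hθab.le (hθabc.mp hθab).le haZ hcZ
  · exact hZ c hc b hb a ha (not_lt.mp (mt hθabc.mpr hθab)) (not_lt.mp hθab) hcZ haZ

/-- If `𝓡'` has the consecutive-ones property over `U`, `𝒞` is a
connected component of its overlap graph, and some consecutive-ones ordering `σ`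
places columns `a, b, c` of three pairwise distinct constrained Venn classes of `𝒞`
in positions `σ a < σ b < σ c` with `a ∈ Z`, `b ∉ Z`, `c ∈ Z` (a 1-0-1 configuration
for `Z`), then `𝓡' ∪ {Z}` does not have the consecutive-ones property. -/
theorem one_zero_one_violation {α : Type*} [DecidableEq α]
    (U : Finset α) (𝓡' : Finset (Finset α)) (hsub : ∀ R ∈ 𝓡', R ⊆ U)
    (𝒞 : (overlapGraph 𝓡').ConnectedComponent)
    (Z : Finset α) (hZU : Z ⊆ U)
    (σ : α → ℕ) (hσ : IsC1POrdering U 𝓡' σ)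
    (a b c : α) (ha : a ∈ U) (hb : b ∈ U) (hc : c ∈ U)
    (hcona : ConstrainedCol 𝓡' 𝒞 a) (hconb : ConstrainedCol 𝓡' 𝒞 b)
    (hconc : ConstrainedCol 𝓡' 𝒞 c)
    (hab : ¬ SameVennClass 𝓡' 𝒞 a b) (hbc : ¬ SameVennClass 𝓡' 𝒞 b c)
    (hac : ¬ SameVennClass 𝓡' 𝒞 a c)
    (horder : σ a < σ b ∧ σ b < σ c)
    (haZ : a ∈ Z) (hbZ : b ∉ Z) (hcZ : c ∈ Z) :
    ¬ HasC1P U (insert Z 𝓡') :=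
  one_zero_one_violation_general U 𝓡' hsub 𝒞 Z σ hσ a b c hcona hconb hconc hab hbc horder haZ hbZ
    hcZ
end
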